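/- For every x ∈ J there exists a unique idempotent e ∈ S such that the G̃-orbit of x has nonempty intersection with eJe and every element of this intersection is regular in J_e, i.e. for every y in the intersection there is no idempotent f ∈ eAe with f ≠ e and fy = yf = y. -/
import Mathlib

/-- `x, y ∈ J` lie in the same `G̃`-orbit: `y = t * a * x * b * t⁻¹` with `t ∈ H = S^×`
(both `t` and `t⁻¹` lie in `S`) and `a, b ∈ N = 1 + J`. -/
def SameOrbitJ {F A : Type*} [Field F] [Ring A] [Algebra F A]
    (J : Ideal A) (S : Subalgebra F A) (x y : A) : Prop :=
  ∃ t : Aˣ, (t : A) ∈ S ∧ ((t⁻¹ : Aˣ) : A) ∈ S ∧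
    ∃ a b : A, a - 1 ∈ J ∧ b - 1 ∈ J ∧
      y = (t : A) * a * x * b * ((t⁻¹ : Aˣ) : A)

/-- `y ∈ J_e = eJe` is *regular in `J_e`* if there is no idempotent `f` of the corner
algebra `eAe` with `f ≠ e` and `f * y = y * f = y`. -/
def IsRegularInJe {A : Type*} [Ring A] (e y : A) : Prop :=
  ¬ ∃ f : A, IsIdempotentElem f ∧ e * f * e = f ∧ f ≠ e ∧ f * y = y ∧ y * f = y

namespace Cor26

/-! ### Monoid lemmas -/

theorem exists_idem_pow {M : Type*} [Monoid M] [Finite M] (p : M) :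
    ∃ N, 1 ≤ N ∧ p ^ N * p ^ N = p ^ N := by
  obtain ⟨i, j, hne, heq⟩ := Finite.exists_ne_map_eq_of_infinite (fun n : ℕ => p ^ n)
  
  have key : ∃ i k, 1 ≤ k ∧ p ^ (i + k) = p ^ i := by
    rcases hne.lt_or_gt with h | h
    · exact ⟨i, j - i, by omega, by rw [show i + (j - i) = j by omega, heq]⟩
    · exact ⟨j, i - j, by omega, by rw [show j + (i - j) = i by omega, ← heq]⟩
  obtain ⟨i, k, hk, hcyc⟩ := key
  have step : ∀ c, p ^ (i + c * k) = p ^ i := by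
    intro c; induction c with
    | zero => simp
    | succ c ih =>
      have h1 : i + (c + 1) * k = (i + k) + c * k := by ring
      rw [h1, pow_add, hcyc, ← pow_add, ih]
  have step2 : ∀ m c, p ^ ((i + c * k) + m) = p ^ (i + m) := by
    intro m c; rw [pow_add, step, ← pow_add]
  set m := k * (i + 1) with hm
  have hmk : (i + 1) * k = m := by rw [hm]; ring
  have him : i ≤ m := by nlinarith
  refine ⟨m, by nlinarith, ?_⟩
  have e1 : p ^ m * p ^ m = p ^ (m + m) := (pow_add p m m).symm
  have e2 : m + m = (i + (i + 1) * k) + (m - i) := by omega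
  rw [e1, e2, step2, show i + (m - i) = m by omega]

theorem pow_fix_left {A : Type*} [Monoid A] {p y : A} (h : p * y = y) :
    ∀ n, p ^ n * y = y := by
  intro n; induction n with
  | zero => simp
  | succ n ih => rw [pow_succ, mul_assoc, h, ih]

theorem pow_fix_right {A : Type*} [Monoid A] {p y : A} (h : y * p = y) :
    ∀ n, y * p ^ n = y := by
  intro n; induction n with
  | zero => simp
  | succ n ih => rw [pow_succ, ← mul_assoc, ih, h]

theorem pow_corner_left {A : Type*} [Monoid A] {e p : A} (h : e * p = p) (n : ℕ) :
    e * p ^ (n + 1) = p ^ (n + 1) := by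
  rw [pow_succ', ← mul_assoc, h]

theorem pow_corner_right {A : Type*} [Monoid A] {e p : A} (h : p * e = p) (n : ℕ) :
    p ^ (n + 1) * e = p ^ (n + 1) := by
  rw [pow_succ, mul_assoc, h]

/-! ### Congruence modulo `J` -/

section Cong

variable {A : Type*} [Ring A] (J : Ideal A)

theorem cong_refl (a : A) : a - a ∈ J := by simp

theorem cong_trans {a b c : A} (h1 : a - b ∈ J) (h2 : b - c ∈ J) : a - c ∈ J := by
  have := J.add_mem h1 h2; simpa using this

theorem cong_mul (hJr : ∀ x ∈ J, ∀ a : A, x * a ∈ J)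
    {a a' b b' : A} (ha : a - a' ∈ J) (hb : b - b' ∈ J) : a * b - a' * b' ∈ J := by
  have h : a * b - a' * b' = a * (b - b') + (a - a') * b' := by noncomm_ring
  rw [h]
  exact J.add_mem (J.mul_mem_left _ hb) (hJr _ ha b')

theorem cong_pow (hJr : ∀ x ∈ J, ∀ a : A, x * a ∈ J)
    {p c : A} (hp : p - c ∈ J) (hc : c * c - c ∈ J) (n : ℕ) : p ^ (n + 1) - c ∈ J := by
  induction n with
  | zero => simpa using hp
  | succ n ih =>
    have h1 := cong_mul J hJr ih hp
    have h2 : p ^ (n + 2) - c = (p ^ (n + 1) * p - c * c) + (c * c - c) := by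
      rw [pow_succ]; abel
    rw [h2]
    exact J.add_mem h1 hc

end Cong

section Main

variable {F A : Type*} [Field F] [Ring A] [Algebra F A]
variable {J : Ideal A} {S : Subalgebra F A}

theorem S_inter (hS : IsCompl (Subalgebra.toSubmodule S) (Submodule.restrictScalars F J))
    {s : A} (hs : s ∈ S) (hsJ : s ∈ J) : s = 0 := by
  have hd := hS.disjoint
  rw [Submodule.disjoint_def] at hd
  exact hd s hs hsJ

theorem Scomm (hred : ∀ a b : A, a * b - b * a ∈ J)
    (hS : IsCompl (Subalgebra.toSubmodule S) (Submodule.restrictScalars F J))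
    {a b : A} (ha : a ∈ S) (hb : b ∈ S) : a * b = b * a := by
  have h0 : a * b - b * a = 0 :=
    S_inter hS (S.sub_mem (S.mul_mem ha hb) (S.mul_mem hb ha)) (hred a b)
  exact sub_eq_zero.mp h0

theorem exists_sPart (hS : IsCompl (Subalgebra.toSubmodule S) (Submodule.restrictScalars F J))
    (a : A) : ∃ s, s ∈ S ∧ a - s ∈ J := by
  have ha : a ∈ (Subalgebra.toSubmodule S) ⊔ (Submodule.restrictScalars F J) := by
    rw [hS.sup_eq_top]; trivial
  obtain ⟨s, hs, j, hj, hsum⟩ := Submodule.mem_sup.mp ha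
  exact ⟨s, hs, by rw [← hsum]; simpa using hj⟩

theorem sPart_unique (hS : IsCompl (Subalgebra.toSubmodule S) (Submodule.restrictScalars F J))
    {a s s' : A} (hs : s ∈ S) (hs' : s' ∈ S) (h1 : a - s ∈ J) (h2 : a - s' ∈ J) : s = s' := by
  have hmem : s - s' ∈ J := by
    have := J.sub_mem h2 h1; simpa using this
  have := S_inter hS (S.sub_mem hs hs') hmem
  exact sub_eq_zero.mp this

theorem isUnit_of_sub_one (hJ : J = (⊥ : Ideal A).jacobson) {a : A}
    (h : a - 1 ∈ J) : IsUnit a := by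
  rw [hJ] at h
  obtain ⟨s, hs⟩ := Ideal.exists_mul_sub_mem_of_sub_one_mem_jacobson a h
  rw [Ideal.mem_bot, sub_eq_zero] at hs
  have hs1 : s - 1 ∈ (⊥ : Ideal A).jacobson := by
    have h2 : s - 1 = -(s * (a - 1)) := by rw [mul_sub, hs]; noncomm_ring
    rw [h2]
    exact Submodule.neg_mem _ (Ideal.mul_mem_left _ _ h)
  obtain ⟨s', hs'⟩ := Ideal.exists_mul_sub_mem_of_sub_one_mem_jacobson s hs1
  rw [Ideal.mem_bot, sub_eq_zero] at hs'
  have has : a = s' := by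
    calc a = 1 * a := (one_mul a).symm
    _ = s' * s * a := by rw [hs']
    _ = s' * (s * a) := mul_assoc _ _ _
    _ = s' := by rw [hs, mul_one]
  exact ⟨⟨a, s, by rw [has, hs'], hs⟩, rfl⟩

theorem unit_sub_one_mem {u : Aˣ} (h : (u : A) - 1 ∈ J) : ((u⁻¹ : Aˣ) : A) - 1 ∈ J := by
  have h2 : ((u⁻¹ : Aˣ) : A) - 1 = ((u⁻¹ : Aˣ) : A) * (1 - (u : A)) := by
    rw [mul_sub, mul_one, Units.inv_mul]
  rw [h2]
  refine Ideal.mul_mem_left _ _ ?_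
  rw [show (1 : A) - (u : A) = -((u : A) - 1) by abel]
  exact J.neg_mem h

theorem orbit_refl (x : A) : SameOrbitJ J S x x := by
  refine ⟨1, by simpa using S.one_mem, by simpa using S.one_mem, 1, 1,
    by simpa using J.zero_mem, by simpa using J.zero_mem, by simp⟩

theorem orbit_symm (hJ : J = (⊥ : Ideal A).jacobson)
    (hJr : ∀ x ∈ J, ∀ a : A, x * a ∈ J) {x y : A}
    (h : SameOrbitJ J S x y) : SameOrbitJ J S y x := by
  obtain ⟨t, htS, htS', a, b, haJ, hbJ, heq⟩ := h
  obtain ⟨au, hau⟩ := isUnit_of_sub_one hJ haJ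
  obtain ⟨bu, hbu⟩ := isUnit_of_sub_one hJ hbJ
  have hauJ : (↑au⁻¹ : A) - 1 ∈ J := unit_sub_one_mem (by rw [hau]; exact haJ)
  have hbuJ : (↑bu⁻¹ : A) - 1 ∈ J := unit_sub_one_mem (by rw [hbu]; exact hbJ)
  refine ⟨t⁻¹, htS', by simpa using htS,
    (t : A) * (↑au⁻¹) * ((t⁻¹ : Aˣ) : A), (t : A) * (↑bu⁻¹) * ((t⁻¹ : Aˣ) : A), ?_, ?_, ?_⟩
  · have h2 : (t : A) * (↑au⁻¹) * ((t⁻¹ : Aˣ) : A) - 1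
        = (t : A) * ((↑au⁻¹ : A) - 1) * ((t⁻¹ : Aˣ) : A) := by
      rw [mul_sub, sub_mul, mul_one, Units.mul_inv]
    rw [h2]
    exact hJr _ (Ideal.mul_mem_left _ _ hauJ) _
  · have h2 : (t : A) * (↑bu⁻¹) * ((t⁻¹ : Aˣ) : A) - 1
        = (t : A) * ((↑bu⁻¹ : A) - 1) * ((t⁻¹ : Aˣ) : A) := by
      rw [mul_sub, sub_mul, mul_one, Units.mul_inv]
    rw [h2]
    exact hJr _ (Ideal.mul_mem_left _ _ hbuJ) _
  · rw [heq, ← hau, ← hbu]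
    simp [mul_assoc, Units.inv_mul_cancel_left, Units.mul_inv_cancel_left]

theorem orbit_trans (hJr : ∀ x ∈ J, ∀ a : A, x * a ∈ J) {x y z : A}
    (h1 : SameOrbitJ J S x y) (h2 : SameOrbitJ J S y z) : SameOrbitJ J S x z := by
  obtain ⟨t, htS, htS', a, b, haJ, hbJ, heq⟩ := h1
  obtain ⟨t', ht'S, ht'S', a', b', ha'J, hb'J, heq'⟩ := h2
  refine ⟨t' * t, S.mul_mem ht'S htS, by rw [mul_inv_rev]; exact S.mul_mem htS' ht'S',
    (((t⁻¹ : Aˣ) : A) * a' * (t : A)) * a, b * (((t⁻¹ : Aˣ) : A) * b' * (t : A)), ?_, ?_, ?_⟩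
  · have h3 : (((t⁻¹ : Aˣ) : A) * a' * (t : A)) * a - 1
        = ((t⁻¹ : Aˣ) : A) * (a' - 1) * (t : A) * a + (a - 1) := by
      rw [mul_sub, sub_mul, sub_mul, mul_one, Units.inv_mul, one_mul]
      abel
    rw [h3]
    exact J.add_mem (hJr _ (hJr _ (Ideal.mul_mem_left _ _ ha'J) _) _) haJ
  · have h3 : b * (((t⁻¹ : Aˣ) : A) * b' * (t : A)) - 1
        = b * (((t⁻¹ : Aˣ) : A) * (b' - 1) * (t : A)) + (b - 1) := by
      rw [mul_sub, sub_mul, mul_one, Units.inv_mul, mul_sub, mul_one]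
      abel
    rw [h3]
    exact J.add_mem (Ideal.mul_mem_left _ _ (hJr _ (Ideal.mul_mem_left _ _ hb'J) _)) hbJ
  · rw [heq', heq]
    simp [mul_assoc, Units.inv_mul_cancel_left, Units.mul_inv_cancel_left, mul_inv_rev]


/-! ### The corner submodule and its rank -/

noncomputable def corner (e : A) : Submodule F A :=
  LinearMap.range (LinearMap.mulLeftRight F (e, e))

theorem mem_corner {e x : A} : x ∈ corner (F := F) e ↔ ∃ a : A, e * a * e = x := by
  constructor
  · rintro ⟨a, rfl⟩; exact ⟨a, rfl⟩
  · rintro ⟨a, rfl⟩; exact ⟨a, rfl⟩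

theorem corner_lt {s e : A} (hss : s * s = s) (hse : s * e = s) (hes : e * s = s)
    (hee : e * e = e) (hsne : s ≠ e) : corner (F := F) s < corner (F := F) e := by
  rw [SetLike.lt_iff_le_and_exists]
  constructor
  · rintro x hx
    rw [mem_corner] at hx ⊢
    obtain ⟨a, rfl⟩ := hx
    refine ⟨s * a * s, ?_⟩
    calc e * (s * a * s) * e = (e * s) * a * (s * e) := by noncomm_ring
    _ = s * a * s := by rw [hse, hes]
  · refine ⟨e, mem_corner.mpr ⟨e, by rw [hee, hee]⟩, ?_⟩
    rw [mem_corner]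
    rintro ⟨a, ha⟩
    apply hsne
    calc s = s * e := hse.symm
    _ = s * (s * a * s) := by rw [← ha]
    _ = (s * s) * a * s := by noncomm_ring
    _ = s * a * s := by rw [hss]
    _ = e := ha

/-! ### The shrinking step -/

theorem shrink (hJ : J = (⊥ : Ideal A).jacobson)
    (hJr : ∀ x ∈ J, ∀ a : A, x * a ∈ J)
    (hred : ∀ a b : A, a * b - b * a ∈ J)
    (hS : IsCompl (Subalgebra.toSubmodule S) (Submodule.restrictScalars F J))
    {e y : A} (he : IsIdempotentElem e) (heS : e ∈ S)
    (hyJ : y ∈ J) (hey : e * y = y) (hye : y * e = y) (hnreg : ¬ IsRegularInJe e y) :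
    ∃ s y₂ : A, IsIdempotentElem s ∧ s ∈ S ∧ s * e = s ∧ e * s = s ∧ s ≠ e ∧ y₂ ∈ J ∧
      SameOrbitJ J S y y₂ ∧ s * y₂ = y₂ ∧ y₂ * s = y₂ := by
  rw [IsRegularInJe, not_not] at hnreg
  obtain ⟨f, hfidem, hefe, hfne, hfy, hyf⟩ := hnreg
  obtain ⟨s, hsS, hfsJ⟩ := exists_sPart hS f
  have hss : s * s = s := by
    have h1 : f - s * s ∈ J := by
      have := cong_mul J hJr hfsJ hfsJ
      rw [hfidem.eq] at this; exact this
    exact sPart_unique hS (S.mul_mem hsS hsS) hsS h1 hfsJ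
  have hese : e * s * e = s := by
    have h1 : f - e * s * e ∈ J := by
      have h2 := cong_mul J hJr (cong_mul J hJr (cong_refl J e) hfsJ) (cong_refl J e)
      rw [hefe] at h2; exact h2
    exact sPart_unique hS (S.mul_mem (S.mul_mem heS hsS) heS) hsS h1 hfsJ
  have hcomm : e * s = s * e := Scomm hred hS heS hsS
  have hse : s * e = s := by
    calc s * e = s * (e * e) := by rw [he.eq]
    _ = (s * e) * e := by rw [mul_assoc]
    _ = (e * s) * e := by rw [hcomm]
    _ = s := hese
  have hes : e * s = s := hcomm.trans hse
  have hsne : s ≠ e := by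
    intro hEq
    have hfeJ : f - e ∈ J := by rw [← hEq]; exact hfsJ
    set j := f - e with hjdef
    have hfj : f = e + j := by rw [hjdef]; abel
    have hjse : e * j * e = j := by
      calc e * j * e = e * f * e - (e * e) * e := by rw [hjdef]; noncomm_ring
      _ = j := by rw [hefe, he.eq, he.eq, hjdef]
    have hej : e * j = j := by
      calc e * j = e * (e * j * e) := by rw [hjse]
      _ = (e * e) * j * e := by noncomm_ring
      _ = e * j * e := by rw [he.eq]
      _ = j := hjse
    have hje : j * e = j := by
      calc j * e = (e * j * e) * e := by rw [hjse]
      _ = e * j * (e * e) := by noncomm_ring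
      _ = e * j * e := by rw [he.eq]
      _ = j := hjse
    have hexp : e + j = e * e + e * j + j * e + j * j := by
      calc e + j = f := hfj.symm
      _ = f * f := hfidem.eq.symm
      _ = (e + j) * (e + j) := by rw [← hfj]
      _ = e * e + e * j + j * e + j * j := by noncomm_ring
    rw [he.eq, hej, hje] at hexp
    have hq : j + j * j = 0 := by
      have h3 : (e + j + j + j * j) - (e + j) = 0 := by rw [← hexp]; abel
      rw [← h3]; abel
    have hunit : IsUnit (1 + j) := by
      apply isUnit_of_sub_one hJ
      rw [add_sub_cancel_left, hjdef]
      exact hfeJ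
    obtain ⟨w, hw⟩ := hunit
    have hj0 : j = 0 := by
      have h4 : j * (1 + j) = 0 := by rw [mul_add, mul_one]; exact hq
      calc j = j * (↑w * ↑w⁻¹) := by rw [Units.mul_inv, mul_one]
      _ = (j * ↑w) * ↑w⁻¹ := by rw [mul_assoc]
      _ = (j * (1 + j)) * ↑w⁻¹ := by rw [hw]
      _ = 0 := by rw [h4, zero_mul]
    exact hfne (by rw [hfj, hj0, add_zero])
  -- the conjugating unit
  set u := f * s + (1 - f) * (1 - s) with hu
  have huJ : u - 1 ∈ J := by
    have hid : u - 1 = f * (s - f) + (f - s) * s + (f * f - f) + (s * s - s) := by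
      rw [hu]; noncomm_ring
    rw [hid]
    refine J.add_mem (J.add_mem (J.add_mem ?_ ?_) ?_) ?_
    · refine Ideal.mul_mem_left _ _ ?_
      rw [show s - f = -(f - s) by abel]
      exact J.neg_mem hfsJ
    · exact hJr _ hfsJ s
    · rw [hfidem.eq, sub_self]; exact J.zero_mem
    · rw [hss, sub_self]; exact J.zero_mem
  obtain ⟨w, hw⟩ := isUnit_of_sub_one hJ huJ
  have hwJ : (↑w : A) - 1 ∈ J := by rw [hw]; exact huJ
  have hwinvJ : (↑w⁻¹ : A) - 1 ∈ J := unit_sub_one_mem hwJ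
  have hus : u * s = f * s := by
    have h1 : u * s = f * (s * s) + (1 - f) * (s - s * s) := by rw [hu]; noncomm_ring
    rw [h1, hss, sub_self, mul_zero, add_zero]
  have hfu : f * u = f * s := by
    have h1 : f * u = (f * f) * s + (f - f * f) * (1 - s) := by rw [hu]; noncomm_ring
    rw [h1, hfidem.eq, sub_self, zero_mul, add_zero]
  have hws : (↑w : A) * s = f * ↑w := by rw [hw, hus, ← hfu]
  have hsw : s = (↑w⁻¹ : A) * f * ↑w := by
    calc s = (↑w⁻¹ : A) * ((↑w : A) * s) := by rw [Units.inv_mul_cancel_left]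
    _ = (↑w⁻¹ : A) * (f * ↑w) := by rw [hws]
    _ = (↑w⁻¹ : A) * f * ↑w := by rw [mul_assoc]
  refine ⟨s, (↑w⁻¹ : A) * y * ↑w, hss, hsS, hse, hes, hsne, ?_, ?_, ?_, ?_⟩
  · exact hJr _ (Ideal.mul_mem_left _ _ hyJ) _
  · exact ⟨1, by simpa using S.one_mem, by simpa using S.one_mem, (↑w⁻¹ : A), (↑w : A),
      hwinvJ, hwJ, by simp⟩
  · have h1 : s * ((↑w⁻¹ : A) * y * ↑w) = (↑w⁻¹ : A) * (f * y) * ↑w := by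
      rw [hsw]
      simp [mul_assoc, Units.mul_inv_cancel_left]
    rw [h1, hfy]
  · have h1 : ((↑w⁻¹ : A) * y * ↑w) * s = (↑w⁻¹ : A) * (y * f) * ↑w := by
      conv_lhs => rw [mul_assoc, hws]
      simp [mul_assoc]
    rw [h1, hyf]


/-! ### The key uniqueness lemma -/

theorem key_le [Finite A] (hJ : J = (⊥ : Ideal A).jacobson)
    (hJr : ∀ x ∈ J, ∀ a : A, x * a ∈ J)
    (hred : ∀ a b : A, a * b - b * a ∈ J)
    (hS : IsCompl (Subalgebra.toSubmodule S) (Submodule.restrictScalars F J))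
    {e e' y y' : A} (he : IsIdempotentElem e) (heS : e ∈ S)
    (he' : IsIdempotentElem e') (he'S : e' ∈ S)
    (hey : e * y = y) (hye : y * e = y) (hreg : IsRegularInJe e y)
    (he'y : e' * y' = y') (hy'e : y' * e' = y')
    (horb : SameOrbitJ J S y y') : e * e' = e := by
  obtain ⟨t, htS, htS', a, b, haJ, hbJ, heq⟩ := horb
  obtain ⟨au, hau⟩ := isUnit_of_sub_one hJ haJ
  obtain ⟨bu, hbu⟩ := isUnit_of_sub_one hJ hbJ
  set u : Aˣ := t * au with hu
  set v : Aˣ := bu * t⁻¹ with hv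
  have hy' : y' = (↑u : A) * y * ↑v := by
    rw [heq, ← hau, ← hbu, hu, hv]
    simp [mul_assoc]
  have hyuv : y = (↑u⁻¹ : A) * y' * ↑v⁻¹ := by
    rw [hy']
    simp [mul_assoc, Units.inv_mul_cancel_left, Units.mul_inv_cancel_left]
  set f₁ : A := (↑u⁻¹ : A) * e' * ↑u with hf₁
  set f₂ : A := (↑v : A) * e' * ↑v⁻¹ with hf₂
  have hf₁y : f₁ * y = y := by
    rw [hyuv, hf₁]
    calc (↑u⁻¹ : A) * e' * ↑u * ((↑u⁻¹ : A) * y' * ↑v⁻¹)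
        = (↑u⁻¹ : A) * (e' * y') * ↑v⁻¹ := by
          simp [mul_assoc, Units.mul_inv_cancel_left]
    _ = (↑u⁻¹ : A) * y' * ↑v⁻¹ := by rw [he'y]
  have hyf₂ : y * f₂ = y := by
    rw [hyuv, hf₂]
    calc (↑u⁻¹ : A) * y' * ↑v⁻¹ * ((↑v : A) * e' * ↑v⁻¹)
        = (↑u⁻¹ : A) * (y' * e') * ↑v⁻¹ := by
          simp [mul_assoc, Units.inv_mul_cancel_left]
    _ = (↑u⁻¹ : A) * y' * ↑v⁻¹ := by rw [hy'e]
  have hf₁J : f₁ - e' ∈ J := by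
    have h1 : e' * ↑u - ↑u * e' ∈ J := by
      have h2 : e' * (↑u : A) - ↑u * e' = (↑t : A) * (e' * (↑au - 1) - (↑au - 1) * e') := by
        rw [hu]
        push_cast
        rw [show e' * ((↑t : A) * ↑au) = (e' * ↑t) * ↑au by noncomm_ring,
          Scomm hred hS he'S htS]
        noncomm_ring
      rw [h2]
      refine Ideal.mul_mem_left _ _ (J.sub_mem ?_ ?_)
      · exact Ideal.mul_mem_left _ _ (by rw [hau]; exact haJ)
      · exact hJr _ (by rw [hau]; exact haJ) _
    have h3 : f₁ - e' = (↑u⁻¹ : A) * (e' * ↑u - ↑u * e') := by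
      rw [hf₁, mul_sub, Units.inv_mul_cancel_left]
      noncomm_ring
    rw [h3]
    exact Ideal.mul_mem_left _ _ h1
  have hf₂J : f₂ - e' ∈ J := by
    have h1 : (↑v : A) * e' - e' * ↑v ∈ J := by
      have h2 : (↑v : A) * e' - e' * ↑v = (((↑bu - 1) * e' - e' * (↑bu - 1)) * ((t⁻¹ : Aˣ) : A)) := by
        rw [hv]
        push_cast
        rw [show (↑bu : A) * ↑(t⁻¹) * e' = ↑bu * (e' * ↑(t⁻¹)) by
            rw [mul_assoc, Scomm hred hS he'S htS']]
        noncomm_ring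
      rw [h2]
      refine hJr _ (J.sub_mem ?_ ?_) _
      · exact hJr _ (by rw [hbu]; exact hbJ) _
      · exact Ideal.mul_mem_left _ _ (by rw [hbu]; exact hbJ)
    have h3 : f₂ - e' = ((↑v : A) * e' - e' * ↑v) * ↑v⁻¹ := by
      rw [hf₂, sub_mul]
      rw [show e' * (↑v : A) * ↑v⁻¹ = e' * ((↑v : A) * ↑v⁻¹) by noncomm_ring, Units.mul_inv,
        mul_one]
    rw [h3]
    exact hJr _ h1 _
  -- idempotent powers
  set p₁ : A := e * f₁ * e with hp₁
  set p₂ : A := e * f₂ * e with hp₂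
  obtain ⟨N₁, hN₁, hP⟩ := exists_idem_pow p₁
  obtain ⟨N₂, hN₂, hQ⟩ := exists_idem_pow p₂
  obtain ⟨m₁, rfl⟩ : ∃ m, N₁ = m + 1 := ⟨N₁ - 1, by omega⟩
  obtain ⟨m₂, rfl⟩ : ∃ m, N₂ = m + 1 := ⟨N₂ - 1, by omega⟩
  set P : A := p₁ ^ (m₁ + 1) with hPdef
  set Q : A := p₂ ^ (m₂ + 1) with hQdef
  have hep₁ : e * p₁ = p₁ := by rw [hp₁]; rw [show e * (e * f₁ * e) = (e * e) * f₁ * e by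
    noncomm_ring, he.eq]
  have hp₁e : p₁ * e = p₁ := by rw [hp₁]; rw [show (e * f₁ * e) * e = e * f₁ * (e * e) by
    noncomm_ring, he.eq]
  have hep₂ : e * p₂ = p₂ := by rw [hp₂]; rw [show e * (e * f₂ * e) = (e * e) * f₂ * e by
    noncomm_ring, he.eq]
  have hp₂e : p₂ * e = p₂ := by rw [hp₂]; rw [show (e * f₂ * e) * e = e * f₂ * (e * e) by
    noncomm_ring, he.eq]
  have heP : e * P = P := pow_corner_left hep₁ m₁
  have hPe : P * e = P := pow_corner_right hp₁e m₁
  have heQ : e * Q = Q := pow_corner_left hep₂ m₂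
  have hQe : Q * e = Q := pow_corner_right hp₂e m₂
  have hp₁y : p₁ * y = y := by
    rw [hp₁, show e * f₁ * e * y = e * (f₁ * (e * y)) by noncomm_ring, hey, hf₁y, hey]
  have hyp₂ : y * p₂ = y := by
    rw [hp₂, show y * (e * f₂ * e) = ((y * e) * f₂) * e by noncomm_ring, hye, hyf₂, hye]
  have hPy : P * y = y := pow_fix_left hp₁y _
  have hyQ : y * Q = y := pow_fix_right hyp₂ _
  set h₁ : A := e - P with hh₁
  set h₂ : A := e - Q with hh₂
  obtain ⟨M, hM, hh⟩ := exists_idem_pow (h₂ * h₁)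
  obtain ⟨m₃, rfl⟩ : ∃ m, M = m + 1 := ⟨M - 1, by omega⟩
  set h : A := (h₂ * h₁) ^ (m₃ + 1) with hhdef
  have heh₂h₁ : e * (h₂ * h₁) = h₂ * h₁ := by
    rw [hh₂, hh₁, show e * ((e - Q) * (e - P)) = (e * e - e * Q) * (e - P) by noncomm_ring,
      he.eq, heQ]
  have hh₂h₁e : (h₂ * h₁) * e = h₂ * h₁ := by
    rw [hh₂, hh₁, show ((e - Q) * (e - P)) * e = (e - Q) * (e * e - P * e) by noncomm_ring,
      he.eq, hPe]
  have heh : e * h = h := pow_corner_left heh₂h₁ m₃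
  have hhe : h * e = h := pow_corner_right hh₂h₁e m₃
  have hh₁y : h₁ * y = 0 := by rw [hh₁, sub_mul, hey, hPy, sub_self]
  have hyh₂ : y * h₂ = 0 := by rw [hh₂, mul_sub, hye, hyQ, sub_self]
  have hhy : h * y = 0 := by
    rw [hhdef, pow_succ, show (h₂ * h₁) ^ m₃ * (h₂ * h₁) * y = (h₂ * h₁) ^ m₃ * (h₂ * (h₁ * y))
      by noncomm_ring, hh₁y, mul_zero, mul_zero]
  have hyh : y * h = 0 := by
    rw [hhdef, pow_succ', show y * ((h₂ * h₁) * (h₂ * h₁) ^ m₃) = ((y * h₂) * h₁) * (h₂ * h₁) ^ m₃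
      by noncomm_ring, hyh₂, zero_mul, zero_mul]
  -- regularity forces h = 0
  have hh0 : h = 0 := by
    by_contra hne0
    apply hreg
    refine ⟨e - h, ?_, ?_, ?_, ?_, ?_⟩
    · show (e - h) * (e - h) = e - h
      rw [sub_mul, mul_sub, mul_sub, he.eq, heh, hhe, hh]
      abel
    · show e * (e - h) * e = e - h
      calc e * (e - h) * e = (e * e) * e - e * (h * e) := by noncomm_ring
      _ = e - h := by rw [hhe, heh, he.eq, he.eq]
    · intro hcon
      apply hne0
      have := sub_eq_self.mp hcon
      exact this
    · rw [sub_mul, hey, hhy, sub_zero]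
    · rw [mul_sub, hye, hyh, sub_zero]
  -- congruences modulo J
  set c : A := e * e' with hc
  have hec : e * c = c := by rw [hc, ← mul_assoc, he.eq]
  have hcc : c * c - c ∈ J := by
    have s1 : c * c - c * (e' * e) ∈ J := cong_mul J hJr (cong_refl J c) (hred e e')
    have s2 : c * (e' * e) = c * e := by
      rw [hc, show (e * e') * (e' * e) = e * (e' * e') * e by noncomm_ring, he'.eq]
    have s3 : c * e - c ∈ J := by have h4 := hred c e; rwa [hec] at h4
    rw [s2] at s1
    exact cong_trans J s1 s3
  have hce : (e * e') * e - c ∈ J := by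
    have s3 := hred (e * e') e
    rwa [show e * (e * e') = c by rw [hc, ← mul_assoc, he.eq]] at s3
  have hpc₁ : p₁ - c ∈ J := by
    have s1 : p₁ - (e * e') * e ∈ J := by
      rw [hp₁]
      exact cong_mul J hJr (cong_mul J hJr (cong_refl J e) hf₁J) (cong_refl J e)
    exact cong_trans J s1 hce
  have hpc₂ : p₂ - c ∈ J := by
    have s1 : p₂ - (e * e') * e ∈ J := by
      rw [hp₂]
      exact cong_mul J hJr (cong_mul J hJr (cong_refl J e) hf₂J) (cong_refl J e)
    exact cong_trans J s1 hce
  have hPc : P - c ∈ J := by rw [hPdef]; exact cong_pow J hJr hpc₁ hcc m₁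
  have hQc : Q - c ∈ J := by rw [hQdef]; exact cong_pow J hJr hpc₂ hcc m₂
  have hh₁d : h₁ - (e - c) ∈ J := by
    rw [hh₁, show (e - P) - (e - c) = -(P - c) by abel]
    exact J.neg_mem hPc
  have hh₂d : h₂ - (e - c) ∈ J := by
    rw [hh₂, show (e - Q) - (e - c) = -(Q - c) by abel]
    exact J.neg_mem hQc
  have hdd : (e - c) * (e - c) - (e - c) ∈ J := by
    have hz : (e * e - e) - 2 * (e * c - c) = 0 := by rw [he.eq, hec]; simp
    have hexp : (e - c) * (e - c) - (e - c)
        = (c * c - c) - (c * e - e * c) + ((e * e - e) - 2 * (e * c - c)) := by noncomm_ring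
    rw [hexp, hz, add_zero]
    exact J.sub_mem hcc (hred c e)
  have hh₂h₁d : h₂ * h₁ - (e - c) ∈ J :=
    cong_trans J (cong_mul J hJr hh₂d hh₁d) hdd
  have hhd : h - (e - c) ∈ J := by rw [hhdef]; exact cong_pow J hJr hh₂h₁d hdd m₃
  have hecJ : e - c ∈ J := by
    rw [hh0] at hhd
    have h5 := J.neg_mem hhd
    simpa using h5
  have hecS : e - c ∈ S := by rw [hc]; exact S.sub_mem heS (S.mul_mem heS he'S)
  have h6 : e - c = 0 := S_inter hS hecS hecJ
  have h7 : e = c := by rw [← sub_eq_zero]; exact h6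
  rw [hc] at h7
  exact h7.symm


/-! ### Existence via strong induction on the corner rank -/

theorem EXaux [FiniteDimensional F A] (hJ : J = (⊥ : Ideal A).jacobson)
    (hJr : ∀ x ∈ J, ∀ a : A, x * a ∈ J)
    (hred : ∀ a b : A, a * b - b * a ∈ J)
    (hS : IsCompl (Subalgebra.toSubmodule S) (Submodule.restrictScalars F J)) :
    ∀ n : ℕ, ∀ e y : A, Module.finrank F (corner (F := F) e) ≤ n →
      IsIdempotentElem e → e ∈ S → y ∈ J → e * y = y → y * e = y →
      ∃ e₂ y₂ : A, IsIdempotentElem e₂ ∧ e₂ ∈ S ∧ e₂ * e = e₂ ∧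
        (¬ IsRegularInJe e y → e₂ ≠ e) ∧ y₂ ∈ J ∧ SameOrbitJ J S y y₂ ∧
        e₂ * y₂ = y₂ ∧ y₂ * e₂ = y₂ ∧ IsRegularInJe e₂ y₂ := by
  intro n
  induction n with
  | zero =>
    intro e y hn he heS hyJ hey hye
    by_cases hreg : IsRegularInJe e y
    · exact ⟨e, y, he, heS, he.eq, fun hc => absurd hreg hc, hyJ, orbit_refl y, hey, hye, hreg⟩
    · exfalso
      obtain ⟨s, y₂, hsidem, hsS, hse, hes, hsne, _, _, _, _⟩ :=
        shrink hJ hJr hred hS he heS hyJ hey hye hreg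
      have hlt := Submodule.finrank_lt_finrank_of_lt (corner_lt (F := F) hsidem hse hes he.eq hsne)
      omega
  | succ n ih =>
    intro e y hn he heS hyJ hey hye
    by_cases hreg : IsRegularInJe e y
    · exact ⟨e, y, he, heS, he.eq, fun hc => absurd hreg hc, hyJ, orbit_refl y, hey, hye, hreg⟩
    · obtain ⟨s, y₂, hsidem, hsS, hse, hes, hsne, hy₂J, horb, hsy₂, hy₂s⟩ :=
        shrink hJ hJr hred hS he heS hyJ hey hye hreg
      have hlt := Submodule.finrank_lt_finrank_of_lt (corner_lt (F := F) hsidem hse hes he.eq hsne)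
      obtain ⟨e₂, y₃, h1, h2, h3, _, h5, h6, h7, h8, h9⟩ :=
        ih s y₂ (by omega) hsidem hsS hy₂J hsy₂ hy₂s
      refine ⟨e₂, y₃, h1, h2, ?_, ?_, h5, orbit_trans hJr horb h6, h7, h8, h9⟩
      · calc e₂ * e = (e₂ * s) * e := by rw [h3]
        _ = e₂ * (s * e) := mul_assoc _ _ _
        _ = e₂ * s := by rw [hse]
        _ = e₂ := h3
      · intro _ hcon
        apply hsne
        rw [hcon] at h3
        calc s = e * s := hes.symm
        _ = e := h3

end Main

end Cor26

/-- Corollary 2.6: for every `x ∈ J` there exists a unique idempotent `e ∈ S` such that the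
`G̃`-orbit of `x` meets `eJe` and every element of that intersection is regular in `J_e`. -/
theorem exists_unique_idempotent_regular_corner
    {F A : Type*} [Field F] [Fintype F] [Ring A] [Algebra F A] [FiniteDimensional F A]
    (J : Ideal A) (hJ : J = (⊥ : Ideal A).jacobson)
    (hJr : ∀ x ∈ J, ∀ a : A, x * a ∈ J)
    (hred : ∀ a b : A, a * b - b * a ∈ J)
    (S : Subalgebra F A)
    (hS : IsCompl (Subalgebra.toSubmodule S) (Submodule.restrictScalars F J))
    (x : A) (hx : x ∈ J) :
    ∃! e : A, IsIdempotentElem e ∧ e ∈ S ∧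
      (∃ y : A, y ∈ J ∧ SameOrbitJ J S x y ∧ e * y = y ∧ y * e = y) ∧
      (∀ y : A, y ∈ J → SameOrbitJ J S x y → e * y = y → y * e = y →
        IsRegularInJe e y) := by
  have : Finite A := Module.finite_of_finite F
  obtain ⟨e₂, y₂, he₂, he₂S, _, _, hy₂J, horb, hey₂, hy₂e, hreg₂⟩ :=
    Cor26.EXaux hJ hJr hred hS (Module.finrank F (Cor26.corner (F := F) (1 : A))) 1 x
      le_rfl IsIdempotentElem.one S.one_mem hx (one_mul x) (mul_one x)
  have hallreg : ∀ y : A, y ∈ J → SameOrbitJ J S x y → e₂ * y = y → y * e₂ = y →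
      IsRegularInJe e₂ y := by
    intro y' hy'J horb' hey' hy'e
    by_contra hnr
    obtain ⟨e₃, y₃, he₃, he₃S, he₃e₂, hne₃, hy₃J, horb₃, hey₃, hy₃e, hreg₃⟩ :=
      Cor26.EXaux hJ hJr hred hS (Module.finrank F (Cor26.corner (F := F) e₂)) e₂ y'
        le_rfl he₂ he₂S hy'J hey' hy'e
    have hne := hne₃ hnr
    have horb₂₃ : SameOrbitJ J S y₂ y₃ :=
      Cor26.orbit_trans hJr (Cor26.orbit_symm hJ hJr horb)
        (Cor26.orbit_trans hJr horb' horb₃)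
    have h1 : e₂ * e₃ = e₂ :=
      Cor26.key_le hJ hJr hred hS he₂ he₂S he₃ he₃S hey₂ hy₂e hreg₂ hey₃ hy₃e horb₂₃
    have h2 : e₃ * e₂ = e₃ :=
      Cor26.key_le hJ hJr hred hS he₃ he₃S he₂ he₂S hey₃ hy₃e hreg₃ hey₂ hy₂e
        (Cor26.orbit_symm hJ hJr horb₂₃)
    apply hne
    calc e₃ = e₃ * e₂ := h2.symm
    _ = e₂ * e₃ := Cor26.Scomm hred hS he₃S he₂S
    _ = e₂ := h1
  refine ⟨e₂, ⟨he₂, he₂S, ⟨y₂, hy₂J, horb, hey₂, hy₂e⟩, hallreg⟩, ?_⟩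
  rintro e' ⟨he', he'S, ⟨y', hy'J, horb', hey', hy'e⟩, hall'⟩
  have hreg' : IsRegularInJe e' y' := hall' y' hy'J horb' hey' hy'e
  have hreg₂' : IsRegularInJe e₂ y₂ := hallreg y₂ hy₂J horb hey₂ hy₂e
  have horb'' : SameOrbitJ J S y' y₂ :=
    Cor26.orbit_trans hJr (Cor26.orbit_symm hJ hJr horb') horb
  have h1 : e' * e₂ = e' :=
    Cor26.key_le hJ hJr hred hS he' he'S he₂ he₂S hey' hy'e hreg' hey₂ hy₂e horb''
  have h2 : e₂ * e' = e₂ :=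
    Cor26.key_le hJ hJr hred hS he₂ he₂S he' he'S hey₂ hy₂e hreg₂ hey' hy'e
      (Cor26.orbit_symm hJ hJr horb'')
  calc e' = e' * e₂ := h1.symm
  _ = e₂ * e' := Cor26.Scomm hred hS he'S he₂S
  _ = e₂ := h2
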